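/- The Narumi polynomials of order r satisfy N_n^{(r)}(x) = B_n^{(n+r+1)}(x+1) for all n ≥ 0, where B_n^{(α)}(x) are the Bernoulli polynomials of order α. -/

import Mathlib

/-!
Substituting `t = eᵘ - 1` turns `log(1+t)/t` into `u/(eᵘ-1)` and `(1+t)ᵐ` into `e^{mu}`.
Substitution does not preserve coefficients, but the change of variables
`[tⁿ] g(t) = [uⁿ] g(eᵘ-1) · eᵘ · (u/(eᵘ-1))ⁿ⁺¹` (Lagrange inversion) corrects for it, and gives
`[tⁿ] (log(1+t)/t)ʳ (1+t)ᵐ = [uⁿ] (u/(eᵘ-1))ⁿ⁺ʳ⁺¹ e^{(m+1)u}`, that is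
`Nₙ^{(r)}(m) = Bₙ^{(n+r+1)}(m+1)` for every natural number `m`; two polynomials agreeing at
infinitely many points are equal.

The change of variables holds for any substitution `t = u X` with `u` a unit of inverse `v`. By
linearity it reduces to `g = tᵏ`, hence to `[Xᵐ] vᵐ⁺¹ (uX)' = δₘ₀`, which holds because
`m vᵐ⁺¹ (uX)' = m vᵐ - X (vᵐ)'` and `X f'` has `m`-th coefficient `m [Xᵐ] f`.
-/

open PowerSeries

section ChangeOfVariables

variable {R : Type*} [CommRing R] {u v : R⟦X⟧}

theorem nsmul_pow_succ_mul_derivative (huv : u * v = 1) (m : ℕ) :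
    m • (v ^ (m + 1) * d⁄dX R (u * X)) = m • v ^ m - X * d⁄dX R (v ^ m) := by
  have hv : d⁄dX R v = -v ^ 2 * d⁄dX R u := by
    simpa using Derivation.leibniz_of_mul_eq_one (d⁄dX R) (mul_comm v u ▸ huv)
  rw [Derivation.leibniz, derivative_pow, hv, derivative_X, smul_eq_mul, smul_eq_mul,
    nsmul_eq_mul, nsmul_eq_mul]
  cases m with
  | zero => simp
  | succ k =>
    simp only [Nat.add_sub_cancel]
    push_cast
    linear_combination (k + 1 : R⟦X⟧) * v ^ (k + 1) * huv

variable [IsAddTorsionFree R]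

theorem coeff_pow_succ_mul_derivative (huv : u * v = 1) (m : ℕ) :
    coeff m (v ^ (m + 1) * d⁄dX R (u * X)) = if m = 0 then 1 else 0 := by
  split_ifs with hm
  · subst hm
    simpa [Derivation.leibniz, mul_comm] using congrArg constantCoeff huv
  · rw [← nsmul_right_inj hm, ← map_nsmul, nsmul_pow_succ_mul_derivative huv]
    obtain ⟨k, rfl⟩ := Nat.exists_eq_succ_of_ne_zero hm
    rw [map_sub, map_nsmul, coeff_succ_X_mul, coeff_derivative]
    simp [nsmul_eq_mul, mul_comm]

theorem coeff_pow_mul_pow_succ_mul_derivative (huv : u * v = 1) (k n : ℕ) :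
    coeff n ((u * X) ^ k * (v ^ (n + 1) * d⁄dX R (u * X))) = if n = k then 1 else 0 := by
  rcases le_or_gt k n with hkn | hnk
  · obtain ⟨j, rfl⟩ := Nat.exists_eq_add_of_le' hkn
    have hshift : (u * X) ^ k * (v ^ (j + k + 1) * d⁄dX R (u * X)) =
        X ^ k * (v ^ (j + 1) * d⁄dX R (u * X)) := by
      calc _ = X ^ k * ((u * v) ^ k * (v ^ (j + 1) * d⁄dX R (u * X))) := by ring
        _ = _ := by rw [huv, one_pow, one_mul]
    rw [hshift, coeff_X_pow_mul, coeff_pow_succ_mul_derivative huv]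
    simp only [Nat.add_eq_right]
  · rw [X_pow_dvd_iff.mp ((pow_dvd_pow_of_dvd (dvd_mul_left X u) k).mul_right _) n hnk,
      if_neg hnk.ne]

theorem coeff_eq_coeff_subst_mul (huv : u * v = 1) (g : R⟦X⟧) (n : ℕ) :
    coeff n g = coeff n (g.subst (u * X) * (v ^ (n + 1) * d⁄dX R (u * X))) := by
  have ha : HasSubst (u * X) := HasSubst.X'.mul_right
  set w := v ^ (n + 1) * d⁄dX R (u * X)
  obtain ⟨h, hg⟩ : ∃ h, g = X ^ (n + 1) * h + (g.trunc (n + 1) : R⟦X⟧) :=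
    ⟨_, eq_X_pow_mul_shift_add_trunc (n + 1) g⟩
  have hhigh : coeff n ((X ^ (n + 1) * h).subst (u * X) * w) = 0 := by
    rw [subst_mul ha, subst_pow ha, subst_X ha, mul_assoc]
    exact X_pow_dvd_iff.mp ((pow_dvd_pow_of_dvd (dvd_mul_left X u) _).mul_right _) n n.lt_succ_self
  have hlow : coeff n ((g.trunc (n + 1) : R⟦X⟧).subst (u * X) * w) = coeff n g := by
    rw [subst_coe ha, Polynomial.aeval_def, eval₂_trunc_eq_sum_range, Finset.sum_mul, map_sum]
    have halg (c : R) : algebraMap R (MvPowerSeries Unit R) c = C c := rfl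
    simp only [halg, mul_assoc, coeff_C_mul, w, coeff_pow_mul_pow_succ_mul_derivative huv]
    simp
  symm
  conv_lhs => rw [hg]
  rw [subst_add ha, add_mul, map_add, hhigh, hlow, zero_add]

end ChangeOfVariables

section Log

variable {A : Type*} [CommRing A] [Algebra ℚ A]

theorem one_add_X_mul_derivative_log : (1 + X) * d⁄dX A (log A) = 1 := by
  ext n
  rw [deriv_log, add_mul, one_mul, map_add, coeff_one]
  cases n with
  | zero => simp
  | succ n => simp [pow_succ]

theorem one_add_X_subst_exp_sub_one : (1 + X : A⟦X⟧).subst (exp A - 1) = exp A := by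
  rw [← coe_substAlgHom HasSubst.exp_sub_one, map_add, map_one, substAlgHom_X, add_sub_cancel]

theorem log_subst_exp_sub_one : (log A).subst (exp A - 1) = X := by
  have ha : HasSubst (exp A - 1) := HasSubst.exp_sub_one
  have : IsAddTorsionFree A := .of_module_rat A
  apply derivative.ext
  · have h := congrArg (substAlgHom ha) (one_add_X_mul_derivative_log (A := A))
    rw [map_mul, map_one, coe_substAlgHom, one_add_X_subst_exp_sub_one] at h
    rw [derivative_subst ha, map_sub, derivative_exp, Derivation.map_one_eq_zero, sub_zero,
      derivative_X, mul_comm, h]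
  · have := constantCoeff_subst_eq_zero (a := exp A - 1) (sub_eq_zero.mpr constantCoeff_exp) _
      (constantCoeff_log (A := A))
    exact this.trans constantCoeff_X.symm

theorem subst_exp_sub_one_mul_eq_one {Lu Eu : A⟦X⟧} (hLu : Lu * X = log A)
    (hEu : Eu * X = exp A - 1) : Lu.subst (exp A - 1) * Eu = 1 := by
  have ha : HasSubst (exp A - 1) := HasSubst.exp_sub_one
  have h := congrArg (subst (exp A - 1)) hLu
  rw [subst_mul ha, subst_X ha, log_subst_exp_sub_one] at h
  apply mul_X_cancel
  rw [mul_assoc, hEu, h, one_mul]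

theorem subst_exp_sub_one_units_zpow {Lu Eu : A⟦X⟧ˣ} (hLu : (Lu : A⟦X⟧) * X = log A)
    (hEu : (Eu : A⟦X⟧) * X = exp A - 1) (r : ℤ) :
    ((Lu ^ r : A⟦X⟧ˣ) : A⟦X⟧).subst (exp A - 1) = ((Eu ^ (-r) : A⟦X⟧ˣ) : A⟦X⟧) := by
  have ha : HasSubst (exp A - 1) := HasSubst.exp_sub_one
  let σ : A⟦X⟧ →+* A⟦X⟧ := (substAlgHom (R := A) ha).toRingHom
  have hσ (f : A⟦X⟧) : σ f = f.subst (exp A - 1) := congrFun (coe_substAlgHom ha) f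
  have hmap : Units.map σ.toMonoidHom Lu = Eu⁻¹ :=
    eq_inv_of_mul_eq_one_left <| Units.ext <| show σ Lu * Eu = 1 by
      rw [hσ, subst_exp_sub_one_mul_eq_one hLu hEu]
  rw [zpow_neg, ← inv_zpow, ← hmap, ← map_zpow]
  exact (hσ _).symm

theorem coeff_units_zpow_mul_one_add_X_pow {Lu Eu : A⟦X⟧ˣ} (hLu : (Lu : A⟦X⟧) * X = log A)
    (hEu : (Eu : A⟦X⟧) * X = exp A - 1) (r : ℤ) (n m : ℕ) :
    coeff n (((Lu ^ r : A⟦X⟧ˣ) : A⟦X⟧) * (1 + X) ^ m) =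
      coeff n (((Eu ^ (-((n : ℤ) + r + 1)) : A⟦X⟧ˣ) : A⟦X⟧) * exp A ^ (m + 1)) := by
  have ha : HasSubst (exp A - 1) := HasSubst.exp_sub_one
  have : IsAddTorsionFree A := .of_module_rat A
  have hEu' : ((Eu ^ (-r) : A⟦X⟧ˣ) : A⟦X⟧) * ((Eu⁻¹ : A⟦X⟧ˣ) : A⟦X⟧) ^ (n + 1) =
      ((Eu ^ (-((n : ℤ) + r + 1)) : A⟦X⟧ˣ) : A⟦X⟧) := by
    rw [← Units.val_pow_eq_pow_val, ← Units.val_mul]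
    congr 1
    group
  rw [coeff_eq_coeff_subst_mul Eu.mul_inv, hEu, subst_mul ha, subst_pow ha, one_add_X_subst_exp_sub_one,
    subst_exp_sub_one_units_zpow hLu hEu, map_sub, derivative_exp, Derivation.map_one_eq_zero,
    sub_zero, ← hEu']
  congr 1
  ring

end Log

section ExponentialGeneratingFunctions

variable {K : Type*} [CommRing K]

theorem mul_mk_eval_of_map_C_mul_mk {F : K⟦X⟧} {c : ℕ → K} {P Q : ℕ → Polynomial K}
    (h : map Polynomial.C F * mk (fun n => c n • P n) = mk (fun n => c n • Q n)) (x : K) :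
    F * mk (fun n => c n * (P n).eval x) = mk (fun n => c n * (Q n).eval x) := by
  have hmk (R : ℕ → Polynomial K) :
      map (Polynomial.evalRingHom x) (mk fun n => c n • R n) = mk fun n => c n * (R n).eval x := by
    ext n
    simp
  have hF : map (Polynomial.evalRingHom x) (map Polynomial.C F) = F := by
    ext n
    simp
  simpa only [map_mul, hmk, hF] using congrArg (map (Polynomial.evalRingHom x)) h

end ExponentialGeneratingFunctions

theorem mk_inv_factorial_mul_descPochhammer_eval (m : ℕ) :
    (mk fun n => (n.factorial : ℚ)⁻¹ * (descPochhammer ℚ n).eval (m : ℚ)) = (1 + X) ^ m := by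
  ext n
  have h1X : ((1 + Polynomial.X : Polynomial ℚ) : ℚ⟦X⟧) = 1 + X := by simp
  rw [coeff_mk, descPochhammer_eval_eq_descFactorial, Nat.descFactorial_eq_factorial_mul_choose,
    ← h1X, ← Polynomial.coe_pow, Polynomial.coeff_coe, Polynomial.coeff_one_add_X_pow]
  have : (n.factorial : ℚ) ≠ 0 := by positivity
  push_cast
  field_simp

theorem mk_inv_factorial_mul_X_pow_eval (m : ℕ) :
    (mk fun n => (n.factorial : ℚ)⁻¹ * (Polynomial.X ^ n : Polynomial ℚ).eval ((m : ℚ) + 1)) =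
      exp ℚ ^ (m + 1) := by
  ext n
  rw [coeff_mk, exp_pow_eq_rescale_exp, coeff_rescale, coeff_exp]
  simp [mul_comm, div_eq_inv_mul]

/-- the Narumi polynomials of order `r`, defined by
`(log(1+t)/t)^r (1+t)^x = Σ_n Nₙ^{(r)}(x) tⁿ/n!`, satisfy
`Nₙ^{(r)}(x) = Bₙ^{(n+r+1)}(x+1)` for all `n ≥ 0`. -/
theorem cauchy_stmt8
    (r : ℤ)
    (L : PowerSeries ℚ)
    (hL : ∀ n : ℕ, PowerSeries.coeff n L = if n = 0 then 0 else (-1 : ℚ) ^ (n - 1) / n)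
    (Lu : (PowerSeries ℚ)ˣ)
    (hLu : (Lu : PowerSeries ℚ) * PowerSeries.X = L)
    (Eu : (PowerSeries ℚ)ˣ)
    (hEu : (Eu : PowerSeries ℚ) * PowerSeries.X = PowerSeries.exp ℚ - 1)
    (B : ℤ → ℕ → Polynomial ℚ)
    (hB : ∀ α : ℤ, PowerSeries.map (Polynomial.C : ℚ →+* Polynomial ℚ)
        ((Eu ^ (-α) : (PowerSeries ℚ)ˣ) : PowerSeries ℚ) *
        PowerSeries.mk (fun n => ((n.factorial : ℚ)⁻¹) • (Polynomial.X : Polynomial ℚ) ^ n) =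
      PowerSeries.mk (fun n => ((n.factorial : ℚ)⁻¹) • B α n))
    (N : ℕ → Polynomial ℚ)
    (hN : PowerSeries.map (Polynomial.C : ℚ →+* Polynomial ℚ)
        ((Lu ^ r : (PowerSeries ℚ)ˣ) : PowerSeries ℚ) *
        PowerSeries.mk (fun n => ((n.factorial : ℚ)⁻¹) • descPochhammer ℚ n) =
      PowerSeries.mk (fun n => ((n.factorial : ℚ)⁻¹) • N n)) :
    ∀ n : ℕ, N n = (B ((n : ℤ) + r + 1) n).comp (Polynomial.X + 1) := by
  obtain rfl : L = log ℚ := by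
    ext n
    rw [hL, coeff_log]
    rcases n with _ | n
    · rfl
    · simp [pow_succ]
  intro n
  refine Polynomial.eq_of_infinite_eval_eq _ _
    (Set.infinite_of_injective_forall_mem Nat.cast_injective fun m : ℕ => ?_)
  have hNm := congrArg (coeff n) (mul_mk_eval_of_map_C_mul_mk hN (m : ℚ))
  have hBm := congrArg (coeff n) (mul_mk_eval_of_map_C_mul_mk (hB (n + r + 1)) ((m : ℚ) + 1))
  rw [mk_inv_factorial_mul_descPochhammer_eval, coeff_mk] at hNm
  rw [mk_inv_factorial_mul_X_pow_eval, coeff_mk] at hBm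
  have h := coeff_units_zpow_mul_one_add_X_pow hLu hEu r n m
  rw [hNm, hBm] at h
  simp only [Set.mem_ofPred_eq, Polynomial.eval_comp, Polynomial.eval_add, Polynomial.eval_X,
    Polynomial.eval_one]
  exact mul_left_cancel₀ (by positivity) h
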